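/- Three-player non-convexity of personalized equilibria: in the 3-player, 2-strategy game where player 1's payoffs are P₁(a₁,a₂,a₃) = P₁(a₁,b₂,b₃) = 1, P₁(b₁,a₂,b₃) = P₁(b₁,b₂,a₃) = 2, all other payoffs of player 1 are 0, and players 2 and 3 receive payoff 1 on every strategy profile, both pure profiles (a₁,a₂,a₃) and (a₁,b₂,b₃) are personalized equilibria, but their convex combination with player 1 playing a₁ with weight 1 and players 2,3 each playing a with weight λ and b with weight 1−λ is not a personalized equilibrium for λ = 1/2. -/

import Mathlib

attribute [local instance] Classical.propDecidable

/-- A probability distribution on a finite type. -/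
def IsDist {β : Type*} [Fintype β] (p : β → ℝ) : Prop :=
  (∀ s, 0 ≤ p s) ∧ ∑ s, p s = 1

variable {k : ℕ} {S : Fin k → Type*} [∀ j, Fintype (S j)]

/-- Player `i`'s personalized payoff given utility `u` (over strategy
profiles) and the profile `p` of distributions: the maximum of
`∑_e w(e)·u(e)` over all fractional hypergraph matchings `w` whose marginal on
every strategy `s ∈ S j` equals `p j s`. -/
noncomputable def ppayoff (u : (∀ j, S j) → ℝ) (p : ∀ j, S j → ℝ) : ℝ :=
  sSup {v : ℝ | ∃ w : (∀ j, S j) → ℝ,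
    (∀ e, 0 ≤ w e) ∧
    (∀ (j : Fin k) (s : S j),
      ∑ e ∈ Finset.univ.filter (fun e : ∀ j, S j => e j = s), w e = p j s) ∧
    v = ∑ e, w e * u e}

/-- A personalized equilibrium: a profile of distributions such that each
player's distribution maximizes her personalized payoff given the others. -/
def PersonalizedEq (u : ∀ _ : Fin k, (∀ j, S j) → ℝ) (p : ∀ j, S j → ℝ) : Prop :=
  (∀ j, IsDist (p j)) ∧
    ∀ (i : Fin k) (q : S i → ℝ), IsDist q →
      ppayoff (u i) (Function.update p i q) ≤ ppayoff (u i) p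

/-- The 3-player, 2-strategy example: strategy `0` is `a`, strategy `1` is
`b`.  Player `0`'s payoffs: `1` on `(a,a,a)` and `(a,b,b)`, `2` on `(b,a,b)`
and `(b,b,a)`, `0` otherwise; players `1` and `2` get payoff `1` everywhere. -/
def uEx : ∀ _ : Fin 3, (∀ _ : Fin 3, Fin 2) → ℝ := fun i e =>
  if i = 0 then
    if e 0 = 0 ∧ e 1 = 0 ∧ e 2 = 0 then 1
    else if e 0 = 0 ∧ e 1 = 1 ∧ e 2 = 1 then 1
    else if e 0 = 1 ∧ e 1 = 0 ∧ e 2 = 1 then 2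
    else if e 0 = 1 ∧ e 1 = 1 ∧ e 2 = 0 then 2
    else 0
  else 1

/-- The pure profile `(a₁, a₂, a₃)`. -/
def pAAA : ∀ _ : Fin 3, Fin 2 → ℝ := fun _ s => if s = 0 then 1 else 0

/-- The pure profile `(a₁, b₂, b₃)`. -/
def pABB : ∀ j : Fin 3, Fin 2 → ℝ := fun j s =>
  if j = 0 then (if s = 0 then 1 else 0) else (if s = 1 then 1 else 0)

/-- The midpoint profile (`λ = 1/2`): player `0` plays `a₁` with weight `1`,
players `1` and `2` each play `a` and `b` with weight `1/2`. -/
noncomputable def pMix : ∀ j : Fin 3, Fin 2 → ℝ := fun j s =>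
  if j = 0 then (if s = 0 then 1 else 0) else 1 / 2

section Aux

open Finset

/-- Marginal of a weighting, with the same decidability instance as in
`ppayoff`. -/
noncomputable def marg (w : (Fin 3 → Fin 2) → ℝ) (j : Fin 3) (s : Fin 2) : ℝ :=
  ∑ e ∈ @Finset.filter _ (fun e : Fin 3 → Fin 2 => e j = s)
      (fun e => Classical.propDecidable (e j = s)) Finset.univ, w e

lemma sum_pi3 (f : (Fin 3 → Fin 2) → ℝ) :
    ∑ e : Fin 3 → Fin 2, f e =
      f ![0,0,0] + f ![0,0,1] + f ![0,1,0] + f ![0,1,1] +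
      f ![1,0,0] + f ![1,0,1] + f ![1,1,0] + f ![1,1,1] := by
  rw [show (univ : Finset (Fin 3 → Fin 2)) =
    {![0,0,0], ![0,0,1], ![0,1,0], ![0,1,1], ![1,0,0], ![1,0,1], ![1,1,0], ![1,1,1]} from by decide]
  rw [sum_insert (by decide), sum_insert (by decide), sum_insert (by decide),
    sum_insert (by decide), sum_insert (by decide), sum_insert (by decide),
    sum_insert (by decide), sum_singleton]
  ring

lemma marg_expand (w : (Fin 3 → Fin 2) → ℝ) (j : Fin 3) (s : Fin 2) :
    marg w j s = ∑ e : Fin 3 → Fin 2, if e j = s then w e else 0 := by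
  rw [marg, Finset.sum_filter]
  exact Finset.sum_congr rfl fun a _ => by by_cases h : a j = s <;> simp [h]

lemma ppayoff_le3 (u : (Fin 3 → Fin 2) → ℝ) (p : ∀ _ : Fin 3, Fin 2 → ℝ) (c : ℝ) (hc : 0 ≤ c)
    (h : ∀ w : (Fin 3 → Fin 2) → ℝ, (∀ e, 0 ≤ w e) →
      (∀ (j : Fin 3) (s : Fin 2), marg w j s = p j s) →
      ∑ e, w e * u e ≤ c) :
    ppayoff u p ≤ c := by
  unfold ppayoff
  apply Real.sSup_le _ hc
  rintro v ⟨w, hw, hm, rfl⟩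
  exact h w hw hm

lemma le_ppayoff3 (u : (Fin 3 → Fin 2) → ℝ) (p : ∀ _ : Fin 3, Fin 2 → ℝ) (v : ℝ)
    (w : (Fin 3 → Fin 2) → ℝ) (hw : ∀ e, 0 ≤ w e)
    (hm : ∀ (j : Fin 3) (s : Fin 2), marg w j s = p j s)
    (hv : v = ∑ e, w e * u e)
    (c : ℝ)
    (hb : ∀ w' : (Fin 3 → Fin 2) → ℝ, (∀ e, 0 ≤ w' e) →
      (∀ (j : Fin 3) (s : Fin 2), marg w' j s = p j s) →
      ∑ e, w' e * u e ≤ c) :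
    v ≤ ppayoff u p := by
  unfold ppayoff
  refine le_csSup ⟨c, ?_⟩ ⟨w, hw, hm, hv⟩
  rintro x ⟨w', hw', hm', rfl⟩
  exact hb w' hw' hm'

end Aux

set_option maxHeartbeats 1000000 in
/-- Non-convexity of personalized equilibria for three players: both pure
profiles are personalized equilibria, but their midpoint is not. -/
theorem personalized_equilibria_not_convex :
    PersonalizedEq uEx pAAA ∧ PersonalizedEq uEx pABB ∧
      ¬ PersonalizedEq uEx pMix := by
  -- bound for payoffs at pAAA
  have hbAAA : ∀ i : Fin 3, ∀ w' : (Fin 3 → Fin 2) → ℝ, (∀ e, 0 ≤ w' e) →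
      (∀ (j : Fin 3) (s : Fin 2), marg w' j s = pAAA j s) →
      ∑ e, w' e * uEx i e ≤ 2 := by
    intro i w hw hm
    have h00 := hm 0 0
    have h01 := hm 0 1
    rw [marg_expand, sum_pi3] at h00 h01
    norm_num [pAAA] at h00 h01
    rw [sum_pi3]
    fin_cases i <;> norm_num [uEx, Matrix.cons_val_two, Matrix.vecHead, Matrix.vecTail] <;>
      linarith [hw ![0,0,0], hw ![0,0,1], hw ![0,1,0], hw ![0,1,1],
        hw ![1,0,0], hw ![1,0,1], hw ![1,1,0], hw ![1,1,1]]
  -- bound for payoffs at pABB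
  have hbABB : ∀ i : Fin 3, ∀ w' : (Fin 3 → Fin 2) → ℝ, (∀ e, 0 ≤ w' e) →
      (∀ (j : Fin 3) (s : Fin 2), marg w' j s = pABB j s) →
      ∑ e, w' e * uEx i e ≤ 2 := by
    intro i w hw hm
    have h00 := hm 0 0
    have h01 := hm 0 1
    rw [marg_expand, sum_pi3] at h00 h01
    norm_num [pABB, Fin.ext_iff] at h00 h01
    rw [sum_pi3]
    fin_cases i <;> norm_num [uEx, Matrix.cons_val_two, Matrix.vecHead, Matrix.vecTail] <;>
      linarith [hw ![0,0,0], hw ![0,0,1], hw ![0,1,0], hw ![0,1,1],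
        hw ![1,0,0], hw ![1,0,1], hw ![1,1,0], hw ![1,1,1]]
  -- RHS lower bound 1 at pAAA, via the pure witness (a,a,a)
  have hgeAAA : ∀ i : Fin 3, (1 : ℝ) ≤ ppayoff (uEx i) pAAA := by
    intro i
    refine le_ppayoff3 _ _ 1
      (fun e => if e 0 = 0 ∧ e 1 = 0 ∧ e 2 = 0 then 1 else 0)
      ?_ ?_ ?_ 2 (hbAAA i)
    · intro e
      split <;> norm_num
    · intro j s
      rw [marg_expand, sum_pi3]
      fin_cases j <;> fin_cases s <;> norm_num [pAAA, Matrix.cons_val_two, Matrix.vecHead, Matrix.vecTail]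
    · rw [sum_pi3]
      fin_cases i <;> norm_num [uEx, Matrix.cons_val_two, Matrix.vecHead, Matrix.vecTail]
  -- RHS lower bound 1 at pABB, via the pure witness (a,b,b)
  have hgeABB : ∀ i : Fin 3, (1 : ℝ) ≤ ppayoff (uEx i) pABB := by
    intro i
    refine le_ppayoff3 _ _ 1
      (fun e => if e 0 = 0 ∧ e 1 = 1 ∧ e 2 = 1 then 1 else 0)
      ?_ ?_ ?_ 2 (hbABB i)
    · intro e
      split <;> norm_num
    · intro j s
      rw [marg_expand, sum_pi3]
      fin_cases j <;> fin_cases s <;> norm_num [pABB, Matrix.cons_val_two, Matrix.vecHead, Matrix.vecTail]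
    · rw [sum_pi3]
      fin_cases i <;> norm_num [uEx, Matrix.cons_val_two, Matrix.vecHead, Matrix.vecTail]
  refine ⟨⟨?_, ?_⟩, ⟨?_, ?_⟩, ?_⟩
  · -- pAAA is a profile of distributions
    intro j
    refine ⟨fun s => by fin_cases s <;> norm_num [pAAA, Matrix.cons_val_two, Matrix.vecHead, Matrix.vecTail], ?_⟩
    rw [Fin.sum_univ_two]; norm_num [pAAA, Matrix.cons_val_two, Matrix.vecHead, Matrix.vecTail]
  · -- pAAA equilibrium conditions
    intro i q hq
    obtain ⟨hq0, hq1⟩ := hq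
    rw [Fin.sum_univ_two] at hq1
    refine le_trans (ppayoff_le3 _ _ 1 (by norm_num) ?_) (hgeAAA i)
    intro w hw hm
    fin_cases i
    · have h11 := hm 1 1
      have h21 := hm 2 1
      have h00 := hm 0 0
      rw [show Function.update pAAA (⟨0, by norm_num⟩ : Fin 3) q = Function.update pAAA 0 q
        from rfl] at h11 h21 h00
      rw [Function.update_of_ne (by decide : (1:Fin 3) ≠ 0)] at h11
      rw [Function.update_of_ne (by decide : (2:Fin 3) ≠ 0)] at h21
      rw [Function.update_self] at h00
      rw [marg_expand, sum_pi3] at h11 h21 h00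
      norm_num [pAAA, Matrix.cons_val_two, Matrix.vecHead, Matrix.vecTail] at h11 h21 h00
      rw [sum_pi3]
      norm_num [uEx, Matrix.cons_val_two, Matrix.vecHead, Matrix.vecTail]
      linarith [hw ![0,0,0], hw ![0,0,1], hw ![0,1,0], hw ![0,1,1],
        hw ![1,0,0], hw ![1,0,1], hw ![1,1,0], hw ![1,1,1], hq0 0, hq0 1]
    · have h20 := hm 2 0
      have h21 := hm 2 1
      rw [show Function.update pAAA (⟨1, by norm_num⟩ : Fin 3) q = Function.update pAAA 1 q
        from rfl] at h20 h21
      rw [Function.update_of_ne (by decide : (2:Fin 3) ≠ 1)] at h20 h21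
      rw [marg_expand, sum_pi3] at h20 h21
      norm_num [pAAA, Matrix.cons_val_two, Matrix.vecHead, Matrix.vecTail] at h20 h21
      rw [sum_pi3]
      norm_num [uEx, Matrix.cons_val_two, Matrix.vecHead, Matrix.vecTail]
      linarith
    · have h20 := hm 1 0
      have h21 := hm 1 1
      rw [show Function.update pAAA (⟨2, by norm_num⟩ : Fin 3) q = Function.update pAAA 2 q
        from rfl] at h20 h21
      rw [Function.update_of_ne (by decide : (1:Fin 3) ≠ 2)] at h20 h21
      rw [marg_expand, sum_pi3] at h20 h21
      norm_num [pAAA] at h20 h21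
      rw [sum_pi3]
      norm_num [uEx, Matrix.cons_val_two, Matrix.vecHead, Matrix.vecTail]
      linarith
  · -- pABB is a profile of distributions
    intro j
    refine ⟨fun s => by fin_cases j <;> fin_cases s <;> norm_num [pABB, Matrix.cons_val_two, Matrix.vecHead, Matrix.vecTail], ?_⟩
    rw [Fin.sum_univ_two]; fin_cases j <;> norm_num [pABB, Matrix.cons_val_two, Matrix.vecHead, Matrix.vecTail]
  · -- pABB equilibrium conditions
    intro i q hq
    obtain ⟨hq0, hq1⟩ := hq
    rw [Fin.sum_univ_two] at hq1
    refine le_trans (ppayoff_le3 _ _ 1 (by norm_num) ?_) (hgeABB i)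
    intro w hw hm
    fin_cases i
    · have h11 := hm 1 0
      have h21 := hm 2 0
      have h00 := hm 0 0
      rw [show Function.update pABB (⟨0, by norm_num⟩ : Fin 3) q = Function.update pABB 0 q
        from rfl] at h11 h21 h00
      rw [Function.update_of_ne (by decide : (1:Fin 3) ≠ 0)] at h11
      rw [Function.update_of_ne (by decide : (2:Fin 3) ≠ 0)] at h21
      rw [Function.update_self] at h00
      rw [marg_expand, sum_pi3] at h11 h21 h00
      norm_num [pABB, Matrix.cons_val_two, Matrix.vecHead, Matrix.vecTail, (by decide : (2:Fin 3) ≠ 0)] at h11 h21 h00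
      rw [sum_pi3]
      norm_num [uEx, Matrix.cons_val_two, Matrix.vecHead, Matrix.vecTail]
      linarith [hw ![0,0,0], hw ![0,0,1], hw ![0,1,0], hw ![0,1,1],
        hw ![1,0,0], hw ![1,0,1], hw ![1,1,0], hw ![1,1,1], hq0 0, hq0 1]
    · have h20 := hm 2 0
      have h21 := hm 2 1
      rw [show Function.update pABB (⟨1, by norm_num⟩ : Fin 3) q = Function.update pABB 1 q
        from rfl] at h20 h21
      rw [Function.update_of_ne (by decide : (2:Fin 3) ≠ 1)] at h20 h21
      rw [marg_expand, sum_pi3] at h20 h21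
      norm_num [pABB, Matrix.cons_val_two, Matrix.vecHead, Matrix.vecTail, (by decide : (2:Fin 3) ≠ 0)] at h20 h21
      rw [sum_pi3]
      norm_num [uEx, Matrix.cons_val_two, Matrix.vecHead, Matrix.vecTail]
      linarith
    · have h20 := hm 1 0
      have h21 := hm 1 1
      rw [show Function.update pABB (⟨2, by norm_num⟩ : Fin 3) q = Function.update pABB 2 q
        from rfl] at h20 h21
      rw [Function.update_of_ne (by decide : (1:Fin 3) ≠ 2)] at h20 h21
      rw [marg_expand, sum_pi3] at h20 h21
      norm_num [pABB, Fin.ext_iff] at h20 h21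
      rw [sum_pi3]
      norm_num [uEx, Matrix.cons_val_two, Matrix.vecHead, Matrix.vecTail]
      linarith
  · -- pMix is not an equilibrium
    rintro ⟨-, h⟩
    have hqb : IsDist (fun s : Fin 2 => if s = 1 then (1:ℝ) else 0) := by
      constructor
      · intro s
        dsimp only
        split <;> norm_num
      · rw [Fin.sum_univ_two]; norm_num
    have hle := h 0 _ hqb
    -- upper bound 1 for ppayoff at pMix
    have hub : ppayoff (uEx 0) pMix ≤ 1 := by
      refine ppayoff_le3 _ _ 1 (by norm_num) ?_
      intro w hw hm
      have h01 := hm 0 1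
      have h10 := hm 1 0
      have h11 := hm 1 1
      rw [marg_expand, sum_pi3] at h01 h10 h11
      norm_num [pMix, Fin.ext_iff] at h01 h10 h11
      rw [sum_pi3]
      norm_num [uEx, Matrix.cons_val_two, Matrix.vecHead, Matrix.vecTail]
      linarith [hw ![0,0,0], hw ![0,0,1], hw ![0,1,0], hw ![0,1,1],
        hw ![1,0,0], hw ![1,0,1], hw ![1,1,0], hw ![1,1,1]]
    -- lower bound 2 for the deviation to b₁
    have hlb : (2:ℝ) ≤ ppayoff (uEx 0)
        (Function.update pMix 0 (fun s : Fin 2 => if s = 1 then (1:ℝ) else 0)) := by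
      refine le_ppayoff3 _ _ 2
        (fun e => if e 0 = 1 ∧ e 1 = 0 ∧ e 2 = 1 then 1/2
          else if e 0 = 1 ∧ e 1 = 1 ∧ e 2 = 0 then 1/2 else 0)
        ?_ ?_ ?_ 2 ?_
      · intro e
        split
        · norm_num
        · split <;> norm_num
      · intro j s
        rw [marg_expand, sum_pi3]
        fin_cases j <;> fin_cases s
        · rw [show (⟨0, by norm_num⟩ : Fin 3) = 0 from rfl, Function.update_self]; norm_num
        · rw [show (⟨0, by norm_num⟩ : Fin 3) = 0 from rfl, Function.update_self]; norm_num [Matrix.cons_val_two, Matrix.vecHead, Matrix.vecTail]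
        · rw [Function.update_of_ne (by decide : (⟨1, by norm_num⟩:Fin 3) ≠ 0)]
          norm_num [pMix, Matrix.cons_val_two, Matrix.vecHead, Matrix.vecTail]
        · rw [Function.update_of_ne (by decide : (⟨1, by norm_num⟩:Fin 3) ≠ 0)]
          norm_num [pMix, Matrix.cons_val_two, Matrix.vecHead, Matrix.vecTail]
        · rw [Function.update_of_ne (by decide : (⟨2, by norm_num⟩:Fin 3) ≠ 0)]
          norm_num [pMix, Matrix.cons_val_two, Matrix.vecHead, Matrix.vecTail]
        · rw [Function.update_of_ne (by decide : (⟨2, by norm_num⟩:Fin 3) ≠ 0)]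
          norm_num [pMix, Matrix.cons_val_two, Matrix.vecHead, Matrix.vecTail]
      · rw [sum_pi3]; norm_num [uEx, Matrix.cons_val_two, Matrix.vecHead, Matrix.vecTail]
      · intro w hw hm
        have h10 := hm 1 0
        have h11 := hm 1 1
        rw [Function.update_of_ne (by decide : (1:Fin 3) ≠ 0)] at h10 h11
        rw [marg_expand, sum_pi3] at h10 h11
        norm_num [pMix, Fin.ext_iff] at h10 h11
        rw [sum_pi3]
        norm_num [uEx, Matrix.cons_val_two, Matrix.vecHead, Matrix.vecTail]
        linarith [hw ![0,0,0], hw ![0,0,1], hw ![0,1,0], hw ![0,1,1],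
          hw ![1,0,0], hw ![1,0,1], hw ![1,1,0], hw ![1,1,1]]
    linarith
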